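/- arXiv:2205.06503 — 3 statements merged into one kernel-verified Lean document; each statement's English description precedes it below -/
import Mathlib

section
/- Let f be a continuously differentiable complex-valued function on the interval [−a, a], where a > 0. Then |f(0)| ≤ (1/(2a)) ∫_{−a}^{a} |f(u)| du + (1/2) ∫_{−a}^{a} |f′(u)| du. -/
open intervalIntegral

/-- Gallagher–Sobolev inequality: for a `C¹` function `f : [-a,a] → ℂ` with `a > 0`,
`|f 0| ≤ (1/(2a)) ∫_{-a}^a |f| + (1/2) ∫_{-a}^a |f'|`. -/
theorem gallagher_sobolev (a : ℝ) (ha : 0 < a) (f f' : ℝ → ℂ)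
    (hderiv : ∀ u ∈ Set.Icc (-a) a, HasDerivAt f (f' u) u)
    (hcont : ContinuousOn f' (Set.Icc (-a) a)) :
    ‖f 0‖ ≤ (1 / (2 * a)) * ∫ u in (-a)..a, ‖f u‖
      + (1 / 2) * ∫ u in (-a)..a, ‖f' u‖ := by
  have hA : -a ≤ a := by linarith
  have hfc : ContinuousOn f (Set.Icc (-a) a) := fun x hx =>
    (hderiv x hx).continuousAt.continuousWithinAt
  have huIcc : Set.uIcc (-a) a = Set.Icc (-a) a := Set.uIcc_of_le hA
  have hfi : IntervalIntegrable (fun u => ‖f u‖) MeasureTheory.volume (-a) a :=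
    (hfc.norm.mono huIcc.subset).intervalIntegrable
  have hf'normc : ContinuousOn (fun u => ‖f' u‖) (Set.Icc (-a) a) := hcont.norm
  have hf'i : IntervalIntegrable (fun u => ‖f' u‖) MeasureTheory.volume (-a) a :=
    (hf'normc.mono huIcc.subset).intervalIntegrable
  -- subinterval integrabilities
  have hsub1 : Set.uIcc (0:ℝ) a ⊆ Set.Icc (-a) a := by
    rw [Set.uIcc_of_le (le_of_lt ha)]
    exact Set.Icc_subset_Icc (by linarith) le_rfl
  have hsub2 : Set.uIcc (-a) (0:ℝ) ⊆ Set.Icc (-a) a := by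
    rw [Set.uIcc_of_le (by linarith : -a ≤ (0:ℝ))]
    exact Set.Icc_subset_Icc le_rfl (by linarith)
  have hfi1 : IntervalIntegrable (fun u => ‖f u‖) MeasureTheory.volume 0 a :=
    (hfc.norm.mono hsub1).intervalIntegrable
  have hfi2 : IntervalIntegrable (fun u => ‖f u‖) MeasureTheory.volume (-a) 0 :=
    (hfc.norm.mono hsub2).intervalIntegrable
  have hf'i1 : IntervalIntegrable (fun u => ‖f' u‖) MeasureTheory.volume 0 a :=
    (hf'normc.mono hsub1).intervalIntegrable
  have hf'i2 : IntervalIntegrable (fun u => ‖f' u‖) MeasureTheory.volume (-a) 0 :=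
    (hf'normc.mono hsub2).intervalIntegrable
  set I1 : ℝ := ∫ t in (-a)..(0:ℝ), ‖f' t‖ with hI1
  set I2 : ℝ := ∫ t in (0:ℝ)..a, ‖f' t‖ with hI2
  set B1 : ℝ := ∫ u in (-a)..(0:ℝ), ‖f u‖ with hB1
  set B2 : ℝ := ∫ u in (0:ℝ)..a, ‖f u‖ with hB2
  -- pointwise bound on [0,a]
  have key1 : ∀ u ∈ Set.Icc (0:ℝ) a, ‖f 0‖ ≤ ‖f u‖ + I2 := by
    intro u hu
    have hsubu : Set.uIcc (0:ℝ) u ⊆ Set.Icc (-a) a := by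
      rw [Set.uIcc_of_le hu.1]
      exact Set.Icc_subset_Icc (by linarith) hu.2
    have hftc : ∫ t in (0:ℝ)..u, f' t = f u - f 0 :=
      integral_eq_sub_of_hasDerivAt (fun t ht => hderiv t (hsubu ht))
        ((hcont.mono hsubu).intervalIntegrable)
    have h1 : ‖f 0‖ ≤ ‖f u‖ + ‖∫ t in (0:ℝ)..u, f' t‖ := by
      rw [hftc]
      calc ‖f 0‖ = ‖f u - (f u - f 0)‖ := by ring_nf
        _ ≤ ‖f u‖ + ‖f u - f 0‖ := norm_sub_le _ _
    have h2 : ‖∫ t in (0:ℝ)..u, f' t‖ ≤ ∫ t in (0:ℝ)..u, ‖f' t‖ :=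
      norm_integral_le_integral_norm hu.1
    have h3 : (∫ t in (0:ℝ)..u, ‖f' t‖) ≤ I2 := by
      apply integral_mono_interval le_rfl hu.1 hu.2
      · filter_upwards with t using norm_nonneg _
      · exact hf'i1
    linarith
  -- pointwise bound on [-a,0]
  have key2 : ∀ u ∈ Set.Icc (-a) (0:ℝ), ‖f 0‖ ≤ ‖f u‖ + I1 := by
    intro u hu
    have hsubu : Set.uIcc u (0:ℝ) ⊆ Set.Icc (-a) a := by
      rw [Set.uIcc_of_le hu.2]
      exact Set.Icc_subset_Icc hu.1 (by linarith)
    have hftc : ∫ t in u..(0:ℝ), f' t = f 0 - f u :=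
      integral_eq_sub_of_hasDerivAt (fun t ht => hderiv t (hsubu ht))
        ((hcont.mono hsubu).intervalIntegrable)
    have h1 : ‖f 0‖ ≤ ‖f u‖ + ‖∫ t in u..(0:ℝ), f' t‖ := by
      rw [hftc]
      calc ‖f 0‖ = ‖f u + (f 0 - f u)‖ := by ring_nf
        _ ≤ ‖f u‖ + ‖f 0 - f u‖ := norm_add_le _ _
    have h2 : ‖∫ t in u..(0:ℝ), f' t‖ ≤ ∫ t in u..(0:ℝ), ‖f' t‖ :=
      norm_integral_le_integral_norm hu.2
    have h3 : (∫ t in u..(0:ℝ), ‖f' t‖) ≤ I1 := by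
      apply integral_mono_interval hu.1 hu.2 le_rfl
      · filter_upwards with t using norm_nonneg _
      · exact hf'i2
    linarith
  -- integrate the bounds
  have int1 : a * ‖f 0‖ ≤ B2 + a * I2 := by
    have h := integral_mono_on (le_of_lt ha)
      (_root_.intervalIntegrable_const (c := ‖f 0‖))
      (hfi1.add (_root_.intervalIntegrable_const (c := I2))) key1
    rw [integral_add hfi1 (_root_.intervalIntegrable_const (c := I2)),
      integral_const, integral_const, sub_zero, smul_eq_mul, smul_eq_mul] at h
    linarith
  have int2 : a * ‖f 0‖ ≤ B1 + a * I1 := by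
    have h := integral_mono_on (by linarith : -a ≤ (0:ℝ))
      (_root_.intervalIntegrable_const (c := ‖f 0‖))
      (hfi2.add (_root_.intervalIntegrable_const (c := I1))) key2
    rw [integral_add hfi2 (_root_.intervalIntegrable_const (c := I1)),
      integral_const, integral_const, sub_neg_eq_add, zero_add, smul_eq_mul, smul_eq_mul] at h
    linarith
  -- split the full integrals
  have splitf : (∫ u in (-a)..a, ‖f u‖) = B1 + B2 :=
    (integral_add_adjacent_intervals hfi2 hfi1).symm
  have splitf' : (∫ u in (-a)..a, ‖f' u‖) = I1 + I2 :=
    (integral_add_adjacent_intervals hf'i2 hf'i1).symm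
  -- NB: the statement parses as `∫ u in -a..a, (‖f u‖ + (1/2) * ∫ ‖f'‖)`,
  -- i.e. the second summand is a constant inside the first integral.
  rw [splitf']
  rw [integral_add hfi (_root_.intervalIntegrable_const (c := (1 / 2) * (I1 + I2))),
    integral_const, smul_eq_mul, splitf]
  have h2a : (0:ℝ) < 2 * a := by linarith
  rw [← mul_le_mul_iff_right₀ h2a]
  have heq : 2 * a * (1 / (2 * a) * (B1 + B2 + (a - -a) * (1 / 2 * (I1 + I2))))
      = (B1 + B2) + a * (I1 + I2) := by
    field_simp
    ring
  rw [heq]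
  linarith [int1, int2]
end

section
/- Let 3 ≤ s < t, x > 0, and 0 < β ≤ t. Suppose there is a constant F ≥ 0 such that for all v ∈ [s, t] and u ∈ ℝ, β ∫_{−∞}^{∞} e^{−2β|w|} |Σ_{j : 0 < γ_j ≤ v} x^{iγ_j} e^{iγ_j w}|² dw ≤ F, where γ₁,...,γ_N are fixed real numbers. Then |Σ_{j : s < γ_j ≤ t} x^{iγ_j}|² ≤ C·(t/β)·F for some absolute constant C. -/
open MeasureTheory Finset

lemma aux_integrable_exp_abs {b : ℝ} (hb : 0 < b) :
    Integrable (fun w : ℝ => Real.exp (-b * |w|)) := by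
  have h1 : IntegrableOn (fun w : ℝ => Real.exp (-b * |w|)) (Set.Ioi 0) :=
    (exp_neg_integrableOn_Ioi 0 hb).congr_fun
      (fun w hw => by rw [abs_of_pos hw]) measurableSet_Ioi
  have h2 : IntegrableOn (fun w : ℝ => Real.exp (-b * |w|)) (Set.Ici 0) :=
    (integrableOn_Ici_iff_integrableOn_Ioi).mpr h1
  have h3 : IntegrableOn (fun w : ℝ => Real.exp (-b * |w|)) (Set.Iic 0) := by
    rw [← Measure.map_neg_eq_self (volume : Measure ℝ)]
    have m : MeasurableEmbedding fun x : ℝ => -x := (Homeomorph.neg ℝ).measurableEmbedding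
    rw [m.integrableOn_map_iff]
    simpa [Function.comp_def, Set.neg_preimage, Set.neg_Iic] using h2
  have := h3.union h1
  rw [Set.Iic_union_Ioi] at this
  exact integrableOn_univ.mp this

lemma aux_ii_indicator (r a b : ℝ) (c : ℂ) :
    IntervalIntegrable (fun u => if r ≤ u then c else 0) volume a b := by
  have h : (fun u : ℝ => if r ≤ u then c else 0)
      = Set.indicator (Set.Ici r) (fun _ => c) := by
    funext u; simp [Set.indicator_apply, Set.mem_Ici]
  rw [h, intervalIntegrable_iff]
  exact (integrableOn_const measure_Ioc_lt_top.ne).indicator measurableSet_Ici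

lemma aux_integral_ite (a b r : ℝ) (hab : a ≤ b) (c : ℂ) :
    (∫ u in a..b, if r ≤ u then c else 0) = (b - max a (min r b)) • c := by
  have h : (fun u : ℝ => if r ≤ u then c else 0)
      = Set.indicator (Set.Ici r) (fun _ => c) := by
    funext u; simp [Set.indicator_apply, Set.mem_Ici]
  rw [intervalIntegral.integral_of_le hab, h, integral_indicator measurableSet_Ici,
    Measure.restrict_restrict measurableSet_Ici, setIntegral_const, measureReal_def]
  rcases le_or_gt r a with h1 | h1
  · have : Set.Ici r ∩ Set.Ioc a b = Set.Ioc a b := by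
      rw [Set.inter_eq_right]
      exact fun u hu => le_trans h1 (le_of_lt hu.1)
    rw [this, Real.volume_Ioc, ENNReal.toReal_ofReal (by linarith)]
    rw [min_eq_left (le_trans h1 hab), max_eq_left h1]
  · rcases le_or_gt r b with h2 | h2
    · have : Set.Ici r ∩ Set.Ioc a b = Set.Icc r b := by
        ext u
        simp only [Set.mem_inter_iff, Set.mem_Ici, Set.mem_Ioc, Set.mem_Icc]
        constructor
        · rintro ⟨hr, _, hb'⟩; exact ⟨hr, hb'⟩
        · rintro ⟨hr, hb'⟩; exact ⟨hr, lt_of_lt_of_le h1 hr, hb'⟩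
      rw [this, Real.volume_Icc, ENNReal.toReal_ofReal (by linarith)]
      rw [min_eq_left h2, max_eq_right (le_of_lt h1)]
    · have : Set.Ici r ∩ Set.Ioc a b = ∅ := by
        ext u
        simp only [Set.mem_inter_iff, Set.mem_Ici, Set.mem_Ioc, Set.mem_empty_iff_false,
          iff_false, not_and]
        intro hr _ h'; exact absurd (le_trans hr h') (not_le.mpr h2)
      rw [this, measure_empty, ENNReal.toReal_zero]
      rw [min_eq_right (le_of_lt h2), max_eq_right hab]
      simp
  
lemma aux_re_bound (z c : ℂ) :
    |(Complex.I * ((starRingEnd ℂ) z) * c).re| ≤ (‖z‖ ^ 2 + ‖c‖ ^ 2) / 2 := by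
  have hz : ‖z‖ ^ 2 = z.re ^ 2 + z.im ^ 2 := by
    rw [Complex.sq_norm, Complex.normSq_apply]; ring
  have hc : ‖c‖ ^ 2 = c.re ^ 2 + c.im ^ 2 := by
    rw [Complex.sq_norm, Complex.normSq_apply]; ring
  rw [hz, hc]
  simp only [Complex.mul_re, Complex.mul_im, Complex.I_re, Complex.I_im,
    Complex.conj_re, Complex.conj_im]
  rw [abs_le]
  constructor <;> nlinarith [sq_nonneg (z.im - c.re), sq_nonneg (z.im + c.re),
    sq_nonneg (z.re - c.im), sq_nonneg (z.re + c.im)]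

lemma aux_normsq (z : ℂ) : ‖z‖ ^ 2 = z.re ^ 2 + z.im ^ 2 := by
  rw [Complex.sq_norm, Complex.normSq_apply]; ring

lemma aux_ite_split (s t r : ℝ) (hs : 0 < s) (hst : s ≤ t) (c : ℂ) :
    (if s < r ∧ r ≤ t then c else 0)
      = (if 0 < r ∧ r ≤ t then c else 0) - (if 0 < r ∧ r ≤ s then c else 0) := by
  by_cases h1 : 0 < r
  · by_cases h2 : r ≤ s
    · rw [if_neg (by rintro ⟨h, _⟩; linarith), if_pos ⟨h1, le_trans h2 hst⟩, if_pos ⟨h1, h2⟩]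
      ring
    · push_neg at h2
      by_cases h3 : r ≤ t
      · rw [if_pos ⟨h2, h3⟩, if_pos ⟨h1, h3⟩, if_neg (by rintro ⟨_, h⟩; linarith)]
        ring
      · rw [if_neg (by rintro ⟨_, h⟩; exact h3 h), if_neg (by rintro ⟨_, h⟩; exact h3 h),
          if_neg (by rintro ⟨_, h⟩; linarith)]
        ring
  · rw [if_neg (by rintro ⟨h, _⟩; exact h1 (lt_trans hs h)),
      if_neg (by rintro ⟨h, _⟩; exact h1 h), if_neg (by rintro ⟨h, _⟩; exact h1 h)]
    ring

set_option maxHeartbeats 1000000 in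
/-- Lemma 1 (quantitative form): if the weighted `L²` averages
`β ∫ e^{-2β|w|} |Σ_{0<γ_j≤v} x^{iγ_j} e^{iγ_j w}|² dw` are bounded by `F` for all
`v ∈ [s,t]`, then `|Σ_{s<γ_j≤t} x^{iγ_j}|² ≤ C (t/β) F` for an absolute constant `C`. -/
theorem exp_sum_bound_from_Fbeta :
    ∃ C : ℝ, 0 < C ∧
      ∀ (N : ℕ) (γ : Fin N → ℝ) (s t x β F : ℝ),
        3 ≤ s → s < t → 0 < x → 0 < β → β ≤ t → 0 ≤ F →
        (∀ v ∈ Set.Icc s t,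
          β * ∫ w : ℝ, Real.exp (-2 * β * |w|) *
              ‖∑ j ∈ Finset.univ.filter (fun j => 0 < γ j ∧ γ j ≤ v),
                  Complex.exp (Complex.I * γ j * (Real.log x + w))‖ ^ 2 ≤ F) →
        ‖∑ j ∈ Finset.univ.filter (fun j => s < γ j ∧ γ j ≤ t),
            Complex.exp (Complex.I * γ j * Real.log x)‖ ^ 2 ≤ C * (t / β) * F := by
  refine ⟨33, by norm_num, ?_⟩
  intro N γ s t x β F hs3 hst hx hβ hβt hF0 hH
  have hs0 : (0:ℝ) < s := by linarith
  have hst' : s ≤ t := le_of_lt hst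
  have ht0 : (0:ℝ) < t := by linarith
  set δ : ℝ := 1 / (2 * β) with hδdef
  have hδ0 : 0 < δ := by positivity
  have hδδ : -δ ≤ δ := by linarith
  set E : ℝ := Real.exp 1 * F / β with hEdef
  have hE0 : 0 ≤ E := by positivity
  set e : Fin N → ℝ → ℂ :=
    fun j w => Complex.exp (Complex.I * γ j * (Real.log x + w)) with hedef
  set A : ℝ → ℝ → ℂ :=
    fun v w => ∑ j ∈ Finset.univ.filter (fun j => 0 < γ j ∧ γ j ≤ v), e j w with hAdef
  set J : Finset (Fin N) := Finset.univ.filter (fun j => s < γ j ∧ γ j ≤ t) with hJdef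
  set D : ℝ → ℂ := fun w => ∑ j ∈ J, e j w with hDdef
  set D' : ℝ → ℂ := fun w => ∑ j ∈ J, (Complex.I * γ j) * e j w with hD'def
  set g : ℝ → ℝ := fun w => ‖D w‖ ^ 2 with hgdef
  set g' : ℝ → ℝ :=
    fun w => 2 * ((D w).re * (D' w).re + (D w).im * (D' w).im) with hg'def
  have hH' : ∀ v ∈ Set.Icc s t,
      β * ∫ w : ℝ, Real.exp (-2 * β * |w|) * ‖A v w‖ ^ 2 ≤ F := hH
  -- continuity of basic pieces
  have hce : ∀ j, Continuous (e j) := by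
    intro j
    exact Complex.continuous_exp.comp
      (continuous_const.mul (continuous_const.add Complex.continuous_ofReal))
  have hnorm1 : ∀ (j : Fin N) (w : ℝ), ‖e j w‖ = 1 := by
    intro j w
    rw [hedef]
    have h0 : (Complex.I * γ j * ((Real.log x : ℂ) + (w : ℂ))).re = 0 := by
      simp [Complex.mul_re, Complex.mul_im]
    rw [Complex.norm_exp]
    norm_num [h0]
  have hAnorm : ∀ v w, ‖A v w‖ ≤ N := by
    intro v w
    refine le_trans (norm_sum_le _ _) ?_
    calc (∑ j ∈ Finset.univ.filter (fun j => 0 < γ j ∧ γ j ≤ v), ‖e j w‖)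
        = (Finset.univ.filter (fun j => 0 < γ j ∧ γ j ≤ v)).card := by
          simp [hnorm1]
      _ ≤ (N : ℝ) := by
          have := Finset.card_filter_le (Finset.univ : Finset (Fin N))
            (fun j => 0 < γ j ∧ γ j ≤ v)
          simp only [Finset.card_univ, Fintype.card_fin] at this
          exact_mod_cast this
  have hAcont : ∀ v, Continuous (A v) :=
    fun v => continuous_finset_sum _ fun j _ => hce j
  have hDcont : Continuous D := continuous_finset_sum _ fun j _ => hce j
  have hD'cont : Continuous D' :=
    continuous_finset_sum _ fun j _ => continuous_const.mul (hce j)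
  have hgcont : Continuous g := hDcont.norm.pow 2
  have hg'cont : Continuous g' := by
    apply continuous_const.mul
    exact ((Complex.continuous_re.comp hDcont).mul (Complex.continuous_re.comp hD'cont)).add
      ((Complex.continuous_im.comp hDcont).mul (Complex.continuous_im.comp hD'cont))
  have hDeq : ∀ w, D w = A t w - A s w := by
    intro w
    rw [hDdef, hAdef]
    simp only
    rw [Finset.sum_filter, Finset.sum_filter, Finset.sum_filter, ← Finset.sum_sub_distrib]
    exact Finset.sum_congr rfl fun j _ => aux_ite_split s t (γ j) hs0 hst' (e j w)
  -- integrability of the weighted integrand on ℝ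
  have h2β : (0:ℝ) < 2 * β := by linarith
  have hIexp : Integrable (fun w : ℝ => Real.exp (-(2 * β) * |w|)) :=
    aux_integrable_exp_abs h2β
  have hInt1 : ∀ v, Integrable (fun w => Real.exp (-2 * β * |w|) * ‖A v w‖ ^ 2) := by
    intro v
    refine Integrable.mono' (hIexp.const_mul ((N : ℝ) ^ 2)) ?_ (ae_of_all _ fun w => ?_)
    · exact ((Real.continuous_exp.comp (continuous_const.mul continuous_abs)).mul
        ((hAcont v).norm.pow 2)).aestronglyMeasurable
    · have h1 : (0:ℝ) ≤ Real.exp (-2 * β * |w|) * ‖A v w‖ ^ 2 := by positivity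
      rw [Real.norm_eq_abs, abs_of_nonneg h1]
      have h2 : ‖A v w‖ ^ 2 ≤ (N : ℝ) ^ 2 :=
        pow_le_pow_left₀ (norm_nonneg _) (hAnorm v w) 2
      have h3 : -2 * β * |w| = -(2 * β) * |w| := by ring
      rw [h3]
      nlinarith [Real.exp_pos (-(2 * β) * |w|)]
  -- the key L² bound on the short interval
  have hP2 : ∀ v ∈ Set.Icc s t, (∫ w in Set.Ioc (-δ) δ, ‖A v w‖ ^ 2) ≤ E := by
    intro v hv
    have hstep : (∫ w in Set.Ioc (-δ) δ, ‖A v w‖ ^ 2)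
        ≤ ∫ w in Set.Ioc (-δ) δ, Real.exp 1 * (Real.exp (-2 * β * |w|) * ‖A v w‖ ^ 2) := by
      refine setIntegral_mono_on (((hAcont v).norm.pow 2).integrableOn_Ioc)
        (((hInt1 v).integrableOn).const_mul (Real.exp 1)) measurableSet_Ioc fun w hw => ?_
      have habs : |w| ≤ δ := abs_le.mpr ⟨le_of_lt hw.1, hw.2⟩
      have h1 : 1 ≤ Real.exp 1 * Real.exp (-2 * β * |w|) := by
        rw [← Real.exp_add]
        apply Real.one_le_exp
        have h2 : 2 * β * |w| ≤ 2 * β * δ := by nlinarith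
        have h3 : 2 * β * δ = 1 := by rw [hδdef]; field_simp
        nlinarith
      nlinarith [sq_nonneg ‖A v w‖]
    refine le_trans hstep ?_
    rw [integral_const_mul]
    have h4 : (∫ w in Set.Ioc (-δ) δ, Real.exp (-2 * β * |w|) * ‖A v w‖ ^ 2)
        ≤ ∫ w : ℝ, Real.exp (-2 * β * |w|) * ‖A v w‖ ^ 2 :=
      setIntegral_le_integral (hInt1 v) (ae_of_all _ fun w => by positivity)
    have h5 : (∫ w : ℝ, Real.exp (-2 * β * |w|) * ‖A v w‖ ^ 2) ≤ F / β := by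
      rw [le_div_iff₀ hβ]
      linarith [hH' v hv]
    rw [hEdef]
    calc Real.exp 1 * ∫ w in Set.Ioc (-δ) δ, Real.exp (-2 * β * |w|) * ‖A v w‖ ^ 2
        ≤ Real.exp 1 * (F / β) :=
          mul_le_mul_of_nonneg_left (le_trans h4 h5) (le_of_lt (Real.exp_pos 1))
      _ = Real.exp 1 * F / β := by ring
  -- the bound on ∫ g
  have hgint : (∫ w in Set.Ioc (-δ) δ, g w) ≤ 4 * E := by
    have hpt : ∀ w, g w ≤ 2 * ‖A t w‖ ^ 2 + 2 * ‖A s w‖ ^ 2 := by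
      intro w
      have h1 : ‖D w‖ ≤ ‖A t w‖ + ‖A s w‖ := by
        rw [hDeq w]; exact norm_sub_le _ _
      have h2 : (0:ℝ) ≤ ‖D w‖ := norm_nonneg _
      simp only [hgdef]
      nlinarith [norm_nonneg (A t w), norm_nonneg (A s w),
        sq_nonneg (‖A t w‖ - ‖A s w‖), mul_self_le_mul_self h2 h1]
    calc (∫ w in Set.Ioc (-δ) δ, g w)
        ≤ ∫ w in Set.Ioc (-δ) δ, (2 * ‖A t w‖ ^ 2 + 2 * ‖A s w‖ ^ 2) := by
          refine setIntegral_mono_on (hgcont.integrableOn_Ioc) ?_ measurableSet_Ioc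
            fun w _ => hpt w
          exact ((((hAcont t).norm.pow 2).integrableOn_Ioc).const_mul 2).add
            ((((hAcont s).norm.pow 2).integrableOn_Ioc).const_mul 2)
      _ = 2 * (∫ w in Set.Ioc (-δ) δ, ‖A t w‖ ^ 2)
          + 2 * ∫ w in Set.Ioc (-δ) δ, ‖A s w‖ ^ 2 := by
          rw [integral_add (f := fun w => 2 * ‖A t w‖ ^ 2) (g := fun w => 2 * ‖A s w‖ ^ 2)
            ((((hAcont t).norm.pow 2).integrableOn_Ioc).const_mul 2)
            ((((hAcont s).norm.pow 2).integrableOn_Ioc).const_mul 2),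
            integral_const_mul, integral_const_mul]
      _ ≤ 2 * E + 2 * E := by
          linarith [hP2 t ⟨hst', le_refl t⟩, hP2 s ⟨le_refl s, hst'⟩]
      _ = 4 * E := by ring
  -- derivative facts
  have hDderiv : ∀ w, HasDerivAt D (D' w) w := by
    intro w
    have key : HasDerivAt (fun w : ℝ => ∑ j ∈ J, e j w)
        (∑ j ∈ J, Complex.I * (γ j : ℂ) * e j w) w := by
      refine HasDerivAt.fun_sum fun j _ => ?_
      have h0 : HasDerivAt (fun w : ℝ => (w : ℂ)) 1 w := by
        simpa using (hasDerivAt_id w).ofReal_comp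
      have h1 : HasDerivAt (fun w : ℝ => ((Real.log x : ℂ) + (w : ℂ))) 1 w :=
        h0.const_add _
      have h2 := (HasDerivAt.const_mul (Complex.I * (γ j : ℂ)) h1).cexp
      show HasDerivAt (fun w : ℝ =>
        Complex.exp (Complex.I * (γ j : ℂ) * ((Real.log x : ℂ) + (w : ℂ))))
        (Complex.I * (γ j : ℂ) *
          Complex.exp (Complex.I * (γ j : ℂ) * ((Real.log x : ℂ) + (w : ℂ)))) w
      convert h2 using 1
      ring
    exact key
  have hgderiv : ∀ w, HasDerivAt g (g' w) w := by
    intro w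
    have hre : HasDerivAt (fun w => (D w).re) ((D' w).re) w := by
      exact (Complex.reCLM.hasFDerivAt.comp_hasDerivAt w (hDderiv w) :)
    have him : HasDerivAt (fun w => (D w).im) ((D' w).im) w := by
      exact (Complex.imCLM.hasFDerivAt.comp_hasDerivAt w (hDderiv w) :)
    have h1 := (hre.pow 2).add (him.pow 2)
    have h2 : g = fun w => (D w).re ^ 2 + (D w).im ^ 2 := by
      funext w
      show ‖D w‖ ^ 2 = (D w).re ^ 2 + (D w).im ^ 2
      exact aux_normsq (D w)
    rw [h2]
    refine h1.congr_deriv ?_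
    simp only [hg'def]
    push_cast
    ring
  -- interval integrability of u ↦ A u w
  have hiiA : ∀ w, IntervalIntegrable (fun u => A u w) volume s t := by
    intro w
    have h1 : (fun u => A u w)
        = fun u => ∑ j ∈ Finset.univ, if 0 < γ j ∧ γ j ≤ u then e j w else 0 := by
      funext u
      simp only [hAdef]
      rw [Finset.sum_filter]
    rw [h1]
    rw [intervalIntegrable_iff]
    apply MeasureTheory.integrable_finset_sum
    intro j _
    by_cases h0 : 0 < γ j
    · simp only [eq_true h0, true_and]
      exact intervalIntegrable_iff.mp (aux_ii_indicator (γ j) s t (e j w))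
    · simp only [eq_false h0, false_and, if_false]
      simpa using (integrable_zero ℝ ℂ (volume.restrict (Set.uIoc s t)))
  -- Abel summation identity
  have hval : ∀ (j : Fin N) (w : ℝ),
      (∫ u in s..t, if 0 < γ j ∧ γ j ≤ u then e j w else 0)
        = if 0 < γ j then (t - max s (min (γ j) t)) • e j w else 0 := by
    intro j w
    by_cases h0 : 0 < γ j
    · simp only [eq_true h0, true_and, if_true]
      exact aux_integral_ite s t (γ j) hst' (e j w)
    · simp only [eq_false h0, false_and, if_false]
      simp
  have hAbel1 : ∀ w, (∫ u in s..t, (A t w - A u w))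
      = ∑ j ∈ J, ((γ j - s : ℝ)) • e j w := by
    intro w
    have h1 : ∀ u : ℝ, A t w - A u w
        = ∑ j ∈ Finset.univ, ((if 0 < γ j ∧ γ j ≤ t then e j w else 0)
            - (if 0 < γ j ∧ γ j ≤ u then e j w else 0)) := by
      intro u
      rw [Finset.sum_sub_distrib]
      simp only [hAdef]
      rw [Finset.sum_filter, Finset.sum_filter]
    have hjii : ∀ j : Fin N, IntervalIntegrable
        (fun u => if 0 < γ j ∧ γ j ≤ u then e j w else 0) volume s t := by
      intro j
      by_cases h0 : 0 < γ j
      · simp only [eq_true h0, true_and]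
        exact aux_ii_indicator (γ j) s t (e j w)
      · simp only [eq_false h0, false_and, if_false]
        exact intervalIntegrable_const
    simp only [h1]
    rw [intervalIntegral.integral_finset_sum
      (fun j _ => intervalIntegrable_const.sub (hjii j))]
    have h2 : ∀ j ∈ Finset.univ, (∫ u in s..t,
        ((if 0 < γ j ∧ γ j ≤ t then e j w else 0)
          - (if 0 < γ j ∧ γ j ≤ u then e j w else 0)))
        = (if s < γ j ∧ γ j ≤ t then (γ j - s) • e j w else 0) := by
      intro j _
      rw [intervalIntegral.integral_sub intervalIntegrable_const (hjii j),
        intervalIntegral.integral_const, hval j w]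
      by_cases h0 : 0 < γ j
      · by_cases hles : γ j ≤ s
        · rw [if_pos ⟨h0, le_trans hles hst'⟩, if_pos h0,
            if_neg (by rintro ⟨h, _⟩; linarith),
            min_eq_left (le_trans hles hst'), max_eq_left hles]
          simp
        · push_neg at hles
          by_cases hlet : γ j ≤ t
          · rw [if_pos ⟨h0, hlet⟩, if_pos h0, if_pos ⟨hles, hlet⟩,
              min_eq_left hlet, max_eq_right (le_of_lt hles), ← sub_smul]
            congr 1
            ring
          · rw [if_neg (by rintro ⟨_, h⟩; exact hlet h), if_pos h0,
              if_neg (by rintro ⟨_, h⟩; exact hlet h)]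
            push_neg at hlet
            rw [min_eq_right (le_of_lt hlet), max_eq_right hst']
            simp
      · rw [if_neg (by rintro ⟨h, _⟩; exact h0 h), if_neg h0,
          if_neg (by rintro ⟨h, _⟩; exact h0 (lt_trans hs0 h))]
        simp
    rw [Finset.sum_congr rfl h2, hJdef, ← Finset.sum_filter]
  have hAbel : ∀ w, D' w
      = Complex.I * ((s : ℂ) * D w + ∫ u in s..t, (A t w - A u w)) := by
    intro w
    rw [hAbel1 w]
    simp only [hDdef, hD'def]
    have hms : (s : ℂ) * (∑ j ∈ J, e j w) = ∑ j ∈ J, (s : ℂ) * e j w :=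
      Finset.mul_sum _ _ _
    rw [hms, ← Finset.sum_add_distrib, Finset.mul_sum]
    refine Finset.sum_congr rfl fun j _ => ?_
    rw [Complex.real_smul]
    push_cast
    ring
  -- bound on |g'|
  have hg'bd : ∀ w, |g' w|
      ≤ (t - s) * g w + ∫ u in Set.Ioc s t, ‖A t w - A u w‖ ^ 2 := by
    intro w
    have hCii : IntervalIntegrable (fun u => A t w - A u w) volume s t :=
      intervalIntegrable_const.sub (hiiA w)
    have hfii : IntervalIntegrable
        (fun u => Complex.I * (starRingEnd ℂ) (D w) * (A t w - A u w)) volume s t :=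
      hCii.const_mul _
    have hg'eq : g' w = 2 * ∫ u in s..t,
        (Complex.I * (starRingEnd ℂ) (D w) * (A t w - A u w)).re := by
      have h1 : g' w = 2 * ((starRingEnd ℂ) (D w) * D' w).re := by
        simp only [hg'def, Complex.mul_re, Complex.conj_re, Complex.conj_im]
        ring
      rw [h1, hAbel w]
      have h2 : (starRingEnd ℂ) (D w)
            * (Complex.I * ((s:ℂ) * D w + ∫ u in s..t, (A t w - A u w)))
          = Complex.I * (s:ℂ) * ((starRingEnd ℂ) (D w) * D w)
            + Complex.I * (starRingEnd ℂ) (D w)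
              * (∫ u in s..t, (A t w - A u w)) := by
        ring
      rw [h2]
      have h3 : (starRingEnd ℂ) (D w) * D w = ((Complex.normSq (D w) : ℝ) : ℂ) := by
        rw [mul_comm, Complex.mul_conj]
      rw [h3]
      have h4 : Complex.I * (starRingEnd ℂ) (D w) * (∫ u in s..t, (A t w - A u w))
          = ∫ u in s..t, Complex.I * (starRingEnd ℂ) (D w) * (A t w - A u w) := by
        rw [← intervalIntegral.integral_const_mul]
      rw [Complex.add_re, h4]
      have h5 : (Complex.I * (s:ℂ) * ((Complex.normSq (D w) : ℝ) : ℂ)).re = 0 := by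
        simp [Complex.mul_re, Complex.mul_im]
      rw [h5]
      have h6 := ContinuousLinearMap.intervalIntegral_comp_comm Complex.reCLM hfii
      simp only [Complex.reCLM_apply] at h6
      rw [← h6]
      ring
    have hreii : IntervalIntegrable
        (fun u => (Complex.I * (starRingEnd ℂ) (D w) * (A t w - A u w)).re)
        volume s t := by
      rw [intervalIntegrable_iff] at hfii ⊢
      have := hfii.re
      simpa [IntegrableOn] using this
    have hnii : IntervalIntegrable (fun u => ‖A t w - A u w‖ ^ 2) volume s t := by
      rw [intervalIntegrable_iff, Set.uIoc_of_le hst']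
      have hasm : AEStronglyMeasurable (fun u => A t w - A u w)
          (volume.restrict (Set.Ioc s t)) := by
        have := intervalIntegrable_iff.mp hCii
        rw [Set.uIoc_of_le hst'] at this
        exact this.aestronglyMeasurable
      have heq : (fun u => ‖A t w - A u w‖ ^ 2)
          = fun u => ‖A t w - A u w‖ * ‖A t w - A u w‖ := by
        funext u; ring
      rw [heq]
      refine Integrable.mono' (integrable_const ((2 * (N:ℝ)) * (2 * (N:ℝ)))) 
        (hasm.norm.mul hasm.norm) (ae_of_all _ fun u => ?_)
      have hb : ‖A t w - A u w‖ ≤ 2 * N := by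
        refine le_trans (norm_sub_le _ _) ?_
        linarith [hAnorm t w, hAnorm u w]
      have hn0 : (0:ℝ) ≤ ‖A t w - A u w‖ := norm_nonneg _
      rw [Real.norm_eq_abs, abs_of_nonneg (by positivity)]
      nlinarith
    calc |g' w| = 2 * |∫ u in s..t,
          (Complex.I * (starRingEnd ℂ) (D w) * (A t w - A u w)).re| := by
          rw [hg'eq, abs_mul]
          norm_num
      _ ≤ 2 * ∫ u in s..t,
            |(Complex.I * (starRingEnd ℂ) (D w) * (A t w - A u w)).re| := by
          have := intervalIntegral.abs_integral_le_integral_abs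
            (f := fun u => (Complex.I * (starRingEnd ℂ) (D w) * (A t w - A u w)).re)
            (μ := volume) hst'
          linarith
      _ ≤ 2 * ∫ u in s..t, (‖D w‖ ^ 2 + ‖A t w - A u w‖ ^ 2) / 2 := by
          have hmono := intervalIntegral.integral_mono_on hst' hreii.abs
            ((intervalIntegrable_const.add hnii).div_const 2)
            (fun u _ => aux_re_bound (D w) (A t w - A u w))
          linarith
      _ = ∫ u in s..t, (‖D w‖ ^ 2 + ‖A t w - A u w‖ ^ 2) := by
          rw [intervalIntegral.integral_div]
          ring
      _ = (t - s) • ‖D w‖ ^ 2 + ∫ u in s..t, ‖A t w - A u w‖ ^ 2 := by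
          rw [intervalIntegral.integral_add intervalIntegrable_const hnii,
            intervalIntegral.integral_const]
      _ = (t - s) * g w + ∫ u in Set.Ioc s t, ‖A t w - A u w‖ ^ 2 := by
          rw [intervalIntegral.integral_of_le hst', smul_eq_mul]
  -- Fubini bound
  haveI i1 : IsFiniteMeasure (volume.restrict (Set.Ioc (-δ) δ)) :=
    ⟨by rw [Measure.restrict_apply_univ]; exact measure_Ioc_lt_top⟩
  haveI i2 : IsFiniteMeasure (volume.restrict (Set.Ioc s t)) :=
    ⟨by rw [Measure.restrict_apply_univ]; exact measure_Ioc_lt_top⟩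
  have hprodInt : Integrable (fun p : ℝ × ℝ => ‖A t p.1 - A p.2 p.1‖ ^ 2)
      ((volume.restrict (Set.Ioc (-δ) δ)).prod (volume.restrict (Set.Ioc s t))) := by
    have hmeas : Measurable (fun p : ℝ × ℝ => ‖A t p.1 - A p.2 p.1‖ ^ 2) := by
      have m1 : Measurable (fun p : ℝ × ℝ => A t p.1) :=
        (hAcont t).measurable.comp measurable_fst
      have m2 : Measurable (fun p : ℝ × ℝ => A p.2 p.1) := by
        have h1 : (fun p : ℝ × ℝ => A p.2 p.1)
            = fun p => ∑ j ∈ Finset.univ, if 0 < γ j ∧ γ j ≤ p.2 then e j p.1 else 0 := by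
          funext p
          simp only [hAdef]
          rw [Finset.sum_filter]
        rw [h1]
        refine Finset.measurable_sum _ fun j _ => ?_
        by_cases h0 : 0 < γ j
        · simp only [eq_true h0, true_and]
          exact Measurable.ite (measurableSet_le measurable_const measurable_snd)
            ((hce j).measurable.comp measurable_fst) measurable_const
        · simp only [eq_false h0, false_and, if_false]
          exact measurable_const
      exact ((m1.sub m2).norm).pow_const 2
    refine Integrable.mono' (integrable_const ((2 * (N:ℝ)) ^ 2))
      hmeas.aestronglyMeasurable (ae_of_all _ fun p => ?_)
    have h1 : ‖A t p.1 - A p.2 p.1‖ ≤ 2 * N := by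
      refine le_trans (norm_sub_le _ _) ?_
      linarith [hAnorm t p.1, hAnorm p.2 p.1]
    rw [Real.norm_eq_abs, abs_of_nonneg (by positivity)]
    exact pow_le_pow_left₀ (norm_nonneg _) h1 2
  have hψint : IntegrableOn
      (fun w => ∫ u in Set.Ioc s t, ‖A t w - A u w‖ ^ 2) (Set.Ioc (-δ) δ) := by
    exact hprodInt.integral_prod_left
  have hψval : (∫ w in Set.Ioc (-δ) δ, ∫ u in Set.Ioc s t, ‖A t w - A u w‖ ^ 2)
      ≤ 4 * E * (t - s) := by
    rw [MeasureTheory.integral_integral_swap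
      (f := fun w u => ‖A t w - A u w‖ ^ 2) (by exact hprodInt)]
    calc (∫ u in Set.Ioc s t, ∫ w in Set.Ioc (-δ) δ, ‖A t w - A u w‖ ^ 2)
        ≤ ∫ u in Set.Ioc s t, 4 * E := by
          refine setIntegral_mono_on ?_ (integrable_const _) measurableSet_Ioc
            fun u hu => ?_
          · exact hprodInt.integral_prod_right
          · have hu' : u ∈ Set.Icc s t := Set.Ioc_subset_Icc_self hu
            calc (∫ w in Set.Ioc (-δ) δ, ‖A t w - A u w‖ ^ 2)
                ≤ ∫ w in Set.Ioc (-δ) δ, (2 * ‖A t w‖ ^ 2 + 2 * ‖A u w‖ ^ 2) := by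
                  refine setIntegral_mono_on
                    ((((hAcont t).sub (hAcont u)).norm.pow 2).integrableOn_Ioc)
                    (((((hAcont t).norm.pow 2).integrableOn_Ioc).const_mul 2).add
                      ((((hAcont u).norm.pow 2).integrableOn_Ioc).const_mul 2))
                    measurableSet_Ioc fun w _ => ?_
                  nlinarith [norm_sub_le (A t w) (A u w), norm_nonneg (A t w - A u w),
                    norm_nonneg (A t w), norm_nonneg (A u w),
                    sq_nonneg (‖A t w‖ - ‖A u w‖)]
              _ = 2 * (∫ w in Set.Ioc (-δ) δ, ‖A t w‖ ^ 2)
                  + 2 * ∫ w in Set.Ioc (-δ) δ, ‖A u w‖ ^ 2 := by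
                  rw [integral_add (f := fun w => 2 * ‖A t w‖ ^ 2) (g := fun w => 2 * ‖A u w‖ ^ 2)
                    (((( hAcont t).norm.pow 2).integrableOn_Ioc).const_mul 2)
                    ((((hAcont u).norm.pow 2).integrableOn_Ioc).const_mul 2),
                    integral_const_mul, integral_const_mul]
              _ ≤ 4 * E := by
                  linarith [hP2 t ⟨hst', le_refl t⟩, hP2 u hu']
      _ = 4 * E * (t - s) := by
          rw [setIntegral_const, measureReal_def, Real.volume_Ioc,
            ENNReal.toReal_ofReal (by linarith), smul_eq_mul]
          ring
  have hK : (∫ w in Set.Ioc (-δ) δ, |g' w|) ≤ 8 * (t - s) * E := by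
    have h1 : (∫ w in Set.Ioc (-δ) δ, |g' w|)
        ≤ ∫ w in Set.Ioc (-δ) δ,
            ((t - s) * g w + ∫ u in Set.Ioc s t, ‖A t w - A u w‖ ^ 2) :=
      setIntegral_mono_on (hg'cont.abs.integrableOn_Ioc)
        (((hgcont.integrableOn_Ioc).const_mul (t - s)).add hψint) measurableSet_Ioc
        fun w _ => hg'bd w
    have h2 : (∫ w in Set.Ioc (-δ) δ,
          ((t - s) * g w + ∫ u in Set.Ioc s t, ‖A t w - A u w‖ ^ 2))
        = (t - s) * (∫ w in Set.Ioc (-δ) δ, g w)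
          + ∫ w in Set.Ioc (-δ) δ, ∫ u in Set.Ioc s t, ‖A t w - A u w‖ ^ 2 := by
      rw [integral_add ((hgcont.integrableOn_Ioc).const_mul (t - s)) hψint,
        integral_const_mul]
    have h3 : (t - s) * (∫ w in Set.Ioc (-δ) δ, g w) ≤ (t - s) * (4 * E) :=
      mul_le_mul_of_nonneg_left hgint (by linarith)
    linarith [hψval]
  -- minimum point
  obtain ⟨w₀, hw₀, hmin⟩ :=
    isCompact_Icc.exists_isMinOn (Set.nonempty_Icc.mpr hδδ) hgcont.continuousOn
  have hmin' : ∀ w ∈ Set.Icc (-δ) δ, g w₀ ≤ g w := fun w hw => hmin hw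
  have hgw0 : g w₀ ≤ 4 * E * β := by
    have h1 : (∫ _w in Set.Ioc (-δ) δ, g w₀) ≤ ∫ w in Set.Ioc (-δ) δ, g w :=
      setIntegral_mono_on (integrable_const _) hgcont.integrableOn_Ioc measurableSet_Ioc
        fun w hw => hmin' w (Set.Ioc_subset_Icc_self hw)
    rw [setIntegral_const, measureReal_def, Real.volume_Ioc,
      ENNReal.toReal_ofReal (by linarith), smul_eq_mul] at h1
    have h2 : δ - -δ = 1 / β := by
      rw [hδdef]
      rw [sub_neg_eq_add, ← add_div, eq_div_iff (ne_of_gt hβ)]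
      field_simp
      norm_num
    rw [h2] at h1
    have h3 : (1 / β) * g w₀ ≤ 4 * E := le_trans h1 hgint
    calc g w₀ = β * ((1 / β) * g w₀) := by field_simp
      _ ≤ β * (4 * E) := mul_le_mul_of_nonneg_left h3 (le_of_lt hβ)
      _ = 4 * E * β := by ring
  -- FTC
  have hftc : (∫ w in w₀..(0:ℝ), g' w) = g 0 - g w₀ :=
    intervalIntegral.integral_eq_sub_of_hasDerivAt (fun w _ => hgderiv w)
      (hg'cont.intervalIntegrable _ _)
  have habs : |(∫ w in w₀..(0:ℝ), g' w)| ≤ ∫ w in Set.Ioc (-δ) δ, |g' w| := by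
    have h1 : |(∫ w in w₀..(0:ℝ), g' w)| ≤ |(∫ w in w₀..(0:ℝ), |g' w|)| := by
      simpa [Real.norm_eq_abs] using
        intervalIntegral.norm_integral_le_abs_integral_norm
          (f := g') (a := w₀) (b := 0) (μ := volume)
    have hsub : Set.uIoc w₀ (0:ℝ) ⊆ Set.uIoc (-δ) δ := by
      intro y hy
      rw [Set.uIoc_of_le hδδ]
      rw [Set.mem_uIoc] at hy
      rcases hy with ⟨h, h'⟩ | ⟨h, h'⟩
      · exact ⟨by linarith [hw₀.1], by linarith [hw₀.2]⟩
      · exact ⟨by linarith, by linarith [hw₀.2]⟩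
    have h2 := intervalIntegral.abs_integral_mono_interval hsub
      (ae_of_all _ fun w => abs_nonneg (g' w))
      ((hg'cont.abs).intervalIntegrable (μ := volume) (-δ) δ)
    have h3 : |(∫ w in (-δ)..δ, |g' w|)| = ∫ w in Set.Ioc (-δ) δ, |g' w| := by
      rw [intervalIntegral.integral_of_le hδδ,
        abs_of_nonneg (setIntegral_nonneg measurableSet_Ioc fun w _ => abs_nonneg _)]
    rw [h3] at h2
    exact le_trans h1 h2
  have hg0 : g 0 ≤ 4 * E * β + 8 * (t - s) * E := by
    have h1 : g 0 - g w₀ ≤ |(∫ w in w₀..(0:ℝ), g' w)| := by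
      rw [hftc] at *
      exact le_abs_self _
    linarith [le_trans h1 (le_trans habs hK)]
  -- final numeric assembly
  have htarget : ‖∑ j ∈ J,
      Complex.exp (Complex.I * γ j * Real.log x)‖ ^ 2 = g 0 := by
    simp only [hgdef, hDdef, hedef, Complex.ofReal_zero, add_zero]
  rw [htarget]
  have h12 : g 0 ≤ 12 * t * E := by nlinarith
  have hexp : Real.exp 1 ≤ 2.7182818286 := le_of_lt Real.exp_one_lt_d9
  calc g 0 ≤ 12 * t * E := h12
    _ ≤ 33 * (t / β) * F := by
        rw [hEdef]
        have h1 : 12 * t * (Real.exp 1 * F / β) = 12 * Real.exp 1 * (t * F / β) := by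
          ring
        have h2 : 33 * (t / β) * F = 33 * (t * F / β) := by ring
        rw [h1, h2]
        have htF : 0 ≤ t * F / β := by positivity
        nlinarith
end

section
/- For finitely many reals γ₁,...,γ_N in (0,T], x ≥ 1, and β > 0, the identity F_β(x,T) = F(x,T) + β(1 − β²) ∫_{−∞}^{∞} (F(xe^u, T) − F(x,T)) e^{−2β|u|} du holds, where F_β(x,T) := Σ_{0<γ,γ'≤T} x^{i(γ−γ')} w_β(γ−γ') with w_β(v) = 4β²/(4β²+v²) and F(x,T) = F_1(x,T). -/
open MeasureTheory Finset

/-- The pair correlation sum `F_b(y) = Σ_{j,k} y^{i(γ_j-γ_k)} w_b(γ_j-γ_k)` for a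
finite list of reals `γ_1,…,γ_N`. -/
noncomputable def Fpair (N : ℕ) (γ : Fin N → ℝ) (b y : ℝ) : ℂ :=
  ∑ j, ∑ k, Complex.exp (Complex.I * (γ j - γ k) * Real.log y)
    * ((4 * b ^ 2 / (4 * b ^ 2 + (γ j - γ k) ^ 2) : ℝ) : ℂ)

open Set Filter

lemma cexp_integrableOn_Ioi (c : ℂ) (hc : c.re < 0) :
    IntegrableOn (fun u : ℝ => Complex.exp (c * u)) (Ioi 0) := by
  have hb : (0:ℝ) < -c.re := by linarith
  refine Integrable.mono' ((exp_neg_integrableOn_Ioi 0 hb)) ?_ ?_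
  · exact (Complex.continuous_exp.comp (continuous_const.mul Complex.continuous_ofReal)).aestronglyMeasurable
  · filter_upwards with u
    simp [Complex.norm_exp, Complex.mul_re]

lemma integral_cexp_Ioi (c : ℂ) (hc : c.re < 0) :
    ∫ u in Ioi (0:ℝ), Complex.exp (c * u) = -1 / c := by
  have hc0 : c ≠ 0 := fun h => by simp [h] at hc
  have hder : ∀ u ∈ Ici (0:ℝ), HasDerivAt (fun u : ℝ => Complex.exp (c * u) / c)
      (Complex.exp (c * u)) u := by
    intro u _
    have h1 : HasDerivAt (fun u : ℝ => c * (u:ℂ)) c u := by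
      simpa using (Complex.ofRealCLM.hasDerivAt.const_mul c)
    have := (h1.cexp).div_const c
    simpa [mul_comm, mul_div_assoc, mul_div_cancel_left₀ _ hc0] using this
  have htends : Tendsto (fun u : ℝ => Complex.exp (c * u) / c) atTop (nhds 0) := by
    rw [tendsto_zero_iff_norm_tendsto_zero]
    have : (fun u : ℝ => ‖Complex.exp (c * u) / c‖) = fun u => Real.exp (c.re * u) / ‖c‖ := by
      funext u; simp [Complex.norm_exp, Complex.mul_re]
    rw [this]
    have : Tendsto (fun u : ℝ => c.re * u) atTop atBot :=
      tendsto_id.const_mul_atTop_of_neg hc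
    simpa using (Real.tendsto_exp_atBot.comp this).div_const ‖c‖
  have := integral_Ioi_of_hasDerivAt_of_tendsto' hder (cexp_integrableOn_Ioi c hc) htends
  rw [this]
  simp
  ring

lemma cexp_integrableOn_Iio (c : ℂ) (hc : 0 < c.re) :
    IntegrableOn (fun u : ℝ => Complex.exp (c * u)) (Iio 0) := by
  rw [← Measure.map_neg_eq_self (volume : Measure ℝ)]
  let m : MeasurableEmbedding fun x : ℝ => -x := (Homeomorph.neg ℝ).measurableEmbedding
  rw [m.integrableOn_map_iff]
  simp_rw [Function.comp_def, neg_preimage, neg_Iio, neg_zero]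
  exact (cexp_integrableOn_Ioi (-c) (by simpa using hc)).congr_fun
    (fun u _ => by push_cast; ring_nf) measurableSet_Ioi

lemma eq_Ici (v b : ℝ) : EqOn (fun u : ℝ => Complex.exp (Complex.I * v * u) * ((Real.exp (-2 * b * |u|) : ℝ) : ℂ))
    (fun u : ℝ => Complex.exp ((Complex.I * v - 2 * b) * u)) (Ici 0) := by
  intro u hu
  simp only [abs_of_nonneg (mem_Ici.mp hu)]
  rw [Complex.ofReal_exp, ← Complex.exp_add]
  congr 1
  push_cast
  ring

lemma eq_Iio (v b : ℝ) : EqOn (fun u : ℝ => Complex.exp (Complex.I * v * u) * ((Real.exp (-2 * b * |u|) : ℝ) : ℂ))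
    (fun u : ℝ => Complex.exp ((Complex.I * v + 2 * b) * u)) (Iio 0) := by
  intro u hu
  simp only [abs_of_nonpos (le_of_lt (mem_Iio.mp hu))]
  rw [Complex.ofReal_exp, ← Complex.exp_add]
  congr 1
  push_cast
  ring

lemma key_integrableOn_Ici (v b : ℝ) (hb : 0 < b) :
    IntegrableOn (fun u : ℝ => Complex.exp (Complex.I * v * u) * ((Real.exp (-2 * b * |u|) : ℝ) : ℂ)) (Ici 0) := by
  have h : IntegrableOn (fun u : ℝ => Complex.exp ((Complex.I * v - 2 * b) * u)) (Ici 0) := by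
    refine (Iff.mpr integrableOn_Ici_iff_integrableOn_Ioi) (cexp_integrableOn_Ioi _ ?_)
    simp
    linarith
  exact h.congr_fun (fun u hu => (eq_Ici v b hu).symm) measurableSet_Ici

lemma key_integrableOn_Iio (v b : ℝ) (hb : 0 < b) :
    IntegrableOn (fun u : ℝ => Complex.exp (Complex.I * v * u) * ((Real.exp (-2 * b * |u|) : ℝ) : ℂ)) (Iio 0) := by
  have h : IntegrableOn (fun u : ℝ => Complex.exp ((Complex.I * v + 2 * b) * u)) (Iio 0) := by
    refine cexp_integrableOn_Iio _ ?_
    simp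
    linarith
  exact h.congr_fun (fun u hu => (eq_Iio v b hu).symm) measurableSet_Iio

lemma key_integrable (v b : ℝ) (hb : 0 < b) :
    Integrable (fun u : ℝ => Complex.exp (Complex.I * v * u) * ((Real.exp (-2 * b * |u|) : ℝ) : ℂ)) := by
  rw [← integrableOn_univ, ← Iio_union_Ici (a := (0:ℝ))]
  exact (key_integrableOn_Iio v b hb).union (key_integrableOn_Ici v b hb)

lemma key_integral (v b : ℝ) (hb : 0 < b) :
    ∫ u : ℝ, Complex.exp (Complex.I * v * u) * ((Real.exp (-2 * b * |u|) : ℝ) : ℂ)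
      = ((4 * b / (4 * b ^ 2 + v ^ 2) : ℝ) : ℂ) := by
  rw [← intervalIntegral.integral_Iio_add_Ici (key_integrableOn_Iio v b hb) (key_integrableOn_Ici v b hb)]
  have h1 : ∫ u in Ici (0:ℝ), Complex.exp (Complex.I * v * u) * ((Real.exp (-2 * b * |u|) : ℝ) : ℂ)
      = -1 / (Complex.I * v - 2 * b) := by
    rw [setIntegral_congr_fun measurableSet_Ici (eq_Ici v b), integral_Ici_eq_integral_Ioi,
      integral_cexp_Ioi]
    simp; linarith
  have h2 : ∫ u in Iio (0:ℝ), Complex.exp (Complex.I * v * u) * ((Real.exp (-2 * b * |u|) : ℝ) : ℂ)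
      = 1 / (Complex.I * v + 2 * b) := by
    rw [setIntegral_congr_fun measurableSet_Iio (eq_Iio v b)]
    have h3 : ∫ u in Iio (0:ℝ), Complex.exp ((Complex.I * v + 2 * b) * u)
        = ∫ u in Ioi (0:ℝ), Complex.exp (-(Complex.I * v + 2 * b) * u) := by
      rw [show Set.Ioi (0:ℝ) = Set.Ioi (-(0:ℝ)) by norm_num,
        ← integral_comp_neg_Iic (0:ℝ) (fun u : ℝ => Complex.exp (-(Complex.I * v + 2 * b) * u)),
        integral_Iic_eq_integral_Iio]
      refine setIntegral_congr_fun measurableSet_Iio (fun u _ => ?_)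
      push_cast
      ring_nf
    rw [h3, integral_cexp_Ioi]
    · rw [div_neg, neg_div, neg_neg]
    · simp; linarith
  have hd1 : (Complex.I * (v:ℂ) - 2 * b) ≠ 0 := by
    intro h
    have := congrArg Complex.re h
    simp at this
    linarith
  have hd2 : (Complex.I * (v:ℂ) + 2 * b) ≠ 0 := by
    intro h
    have := congrArg Complex.re h
    simp at this
    linarith
  rw [h1, h2, div_add_div _ _ hd2 hd1,
    show (1 * (Complex.I * (v:ℂ) - 2 * b) + (Complex.I * (v:ℂ) + 2 * b) * -1) = -(4 * (b:ℂ)) by ring,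
    show ((Complex.I * (v:ℂ) + 2 * b) * (Complex.I * (v:ℂ) - 2 * b)) = -(4 * (b:ℂ) ^ 2 + (v:ℂ) ^ 2) by
      linear_combination (v:ℂ) ^ 2 * Complex.I_sq,
    neg_div_neg_eq]
  push_cast
  ring

noncomputable def pairTerm (b L v u : ℝ) : ℂ :=
  ((Complex.exp (Complex.I * v * ((L : ℂ) + (u : ℂ))) - Complex.exp (Complex.I * v * L)) *
    ((4 * 1 ^ 2 / (4 * 1 ^ 2 + v ^ 2) : ℝ) : ℂ)) * ((Real.exp (-2 * b * |u|) : ℝ) : ℂ)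

lemma pairTerm_eq (b L v : ℝ) : pairTerm b L v = fun u : ℝ =>
    (Complex.exp (Complex.I * v * L) * ((4 * 1 ^ 2 / (4 * 1 ^ 2 + v ^ 2) : ℝ) : ℂ))
      * (Complex.exp (Complex.I * v * u) * ((Real.exp (-2 * b * |u|) : ℝ) : ℂ))
    - (Complex.exp (Complex.I * v * L) * ((4 * 1 ^ 2 / (4 * 1 ^ 2 + v ^ 2) : ℝ) : ℂ))
      * (Complex.exp (Complex.I * (0:ℝ) * u) * ((Real.exp (-2 * b * |u|) : ℝ) : ℂ)) := by
  funext u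
  simp only [pairTerm, mul_add, Complex.exp_add, Complex.ofReal_zero, mul_zero, zero_mul,
    Complex.exp_zero, one_mul]
  ring

lemma pairTerm_integrable (b L v : ℝ) (hb : 0 < b) : Integrable (pairTerm b L v) := by
  rw [pairTerm_eq]
  exact ((key_integrable v b hb).const_mul _).sub ((key_integrable 0 b hb).const_mul _)

lemma pairTerm_integral (b L v : ℝ) (hb : 0 < b) :
    ∫ u : ℝ, pairTerm b L v u
      = Complex.exp (Complex.I * v * L) * ((4 * 1 ^ 2 / (4 * 1 ^ 2 + v ^ 2) : ℝ) : ℂ)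
        * (((4 * b / (4 * b ^ 2 + v ^ 2) : ℝ) : ℂ) - ((4 * b / (4 * b ^ 2 + (0:ℝ) ^ 2) : ℝ) : ℂ)) := by
  rw [pairTerm_eq, integral_sub ((key_integrable v b hb).const_mul _)
    ((key_integrable 0 b hb).const_mul _), integral_const_mul, integral_const_mul,
    key_integral v b hb, key_integral 0 b hb, mul_sub]

lemma walg (v b : ℝ) (hb : 0 < b) :
    4 * b ^ 2 / (4 * b ^ 2 + v ^ 2)
      = 4 * 1 ^ 2 / (4 * 1 ^ 2 + v ^ 2)
        + b * (1 - b ^ 2) * (4 * 1 ^ 2 / (4 * 1 ^ 2 + v ^ 2))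
          * (4 * b / (4 * b ^ 2 + v ^ 2) - 4 * b / (4 * b ^ 2 + (0:ℝ) ^ 2)) := by
  have h1 : 4 * b ^ 2 + v ^ 2 ≠ 0 := by positivity
  have h2 : 4 * (1:ℝ) ^ 2 + v ^ 2 ≠ 0 := by positivity
  have h3 : 4 * b ^ 2 + (0:ℝ) ^ 2 ≠ 0 := by positivity
  field_simp
  ring

/-- Lemma 2: for reals `γ_1,…,γ_N ∈ (0,T]`, `x ≥ 1`, and `β > 0`,
`F_β(x,T) = F(x,T) + β(1-β²) ∫ (F(xe^u,T) - F(x,T)) e^{-2β|u|} du`, where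
`F = F_1`. -/
theorem Fbeta_eq_F_plus_integral (N : ℕ) (γ : Fin N → ℝ) (T x β : ℝ)
    (hγ : ∀ j, 0 < γ j ∧ γ j ≤ T) (hx : 1 ≤ x) (hβ : 0 < β) :
    Fpair N γ β x
      = Fpair N γ 1 x
        + ((β * (1 - β ^ 2) : ℝ) : ℂ)
          * ∫ u : ℝ, (Fpair N γ 1 (x * Real.exp u) - Fpair N γ 1 x)
              * ((Real.exp (-2 * β * |u|) : ℝ) : ℂ) := by
  have hx0 : (0:ℝ) < x := lt_of_lt_of_le one_pos hx
  set L := Real.log x with hL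
  have hlog : ∀ u : ℝ, Real.log (x * Real.exp u) = L + u := fun u => by
    rw [hL, Real.log_mul (ne_of_gt hx0) (Real.exp_ne_zero u), Real.log_exp]
  have hrep : ∀ u : ℝ, (Fpair N γ 1 (x * Real.exp u) - Fpair N γ 1 x)
      * ((Real.exp (-2 * β * |u|) : ℝ) : ℂ) = ∑ j, ∑ k, pairTerm β L (γ j - γ k) u := by
    intro u
    simp only [Fpair, hlog, pairTerm]
    rw [← Finset.sum_sub_distrib, Finset.sum_mul]
    refine Finset.sum_congr rfl fun j _ => ?_
    rw [← Finset.sum_sub_distrib, Finset.sum_mul]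
    refine Finset.sum_congr rfl fun k _ => ?_
    push_cast
    ring
  have hInt : (∫ u : ℝ, (Fpair N γ 1 (x * Real.exp u) - Fpair N γ 1 x)
      * ((Real.exp (-2 * β * |u|) : ℝ) : ℂ))
      = ∑ j, ∑ k, ∫ u : ℝ, pairTerm β L (γ j - γ k) u := by
    rw [show (fun u : ℝ => (Fpair N γ 1 (x * Real.exp u) - Fpair N γ 1 x)
        * ((Real.exp (-2 * β * |u|) : ℝ) : ℂ))
        = fun u : ℝ => ∑ j, ∑ k, pairTerm β L (γ j - γ k) u from funext hrep]
    rw [integral_finset_sum _ (fun j _ =>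
      integrable_finset_sum _ (fun k _ => pairTerm_integrable β L _ hβ))]
    exact Finset.sum_congr rfl fun j _ =>
      integral_finset_sum _ (fun k _ => pairTerm_integrable β L _ hβ)
  rw [hInt]
  simp only [Fpair, Finset.mul_sum, ← Finset.sum_add_distrib]
  refine Finset.sum_congr rfl fun j _ => Finset.sum_congr rfl fun k _ => ?_
  rw [pairTerm_integral β L _ hβ]
  rw [show ((4 * β ^ 2 / (4 * β ^ 2 + (γ j - γ k) ^ 2) : ℝ) : ℂ)
      = ((4 * 1 ^ 2 / (4 * 1 ^ 2 + (γ j - γ k) ^ 2)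
        + β * (1 - β ^ 2) * (4 * 1 ^ 2 / (4 * 1 ^ 2 + (γ j - γ k) ^ 2))
          * (4 * β / (4 * β ^ 2 + (γ j - γ k) ^ 2) - 4 * β / (4 * β ^ 2 + (0:ℝ) ^ 2)) : ℝ) : ℂ)
    from congrArg _ (walg (γ j - γ k) β hβ)]
  push_cast
  ring
end
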